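/- arXiv:2210.12235 — 2 statements merged into one kernel-verified Lean document; each statement's English description precedes it below -/
import Mathlib

section
/- Let T ≥ 1, β ∈ ℝ, and let C(s, t) ∈ ℝ (1 ≤ s ≤ t ≤ T) satisfy the subadditivity condition C(s, t) + C(t+1, u) ≤ C(s, u) for all 1 ≤ s ≤ t < u ≤ T. Let F(0) = 0 and F(t) = min_{0 ≤ τ < t}{ F(τ) + C(τ+1, t) + β } for 1 ≤ t ≤ T. Suppose that for some integers 0 ≤ τ < t < T one has F(τ) + C(τ+1, t) > F(t). Then for every t' with t < t' ≤ T, F(τ) + C(τ+1, t') + β > F(t) + C(t+1, t') + β ≥ F(t'); in particular, τ is never a minimizer of s ↦ F(s) + C(s+1, t') + β over 0 ≤ s < t'. -/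
/-- The optimal penalized segmentation cost defined by the dynamic programming
recursion: `F(0) = 0` and `F(t) = min_{0 ≤ τ < t} { F(τ) + C(τ+1, t) + β }`. -/
noncomputable def Fdp (C : ℕ → ℕ → ℝ) (β : ℝ) : ℕ → ℝ
  | 0 => 0
  | t + 1 =>
      (Finset.range (t + 1)).attach.inf'
        (Finset.attach_nonempty_iff.mpr (Finset.nonempty_range_iff.mpr (Nat.succ_ne_zero t)))
        (fun τ => Fdp C β τ.1 + C (τ.1 + 1) (t + 1) + β)
  termination_by t => t
  decreasing_by exact Finset.mem_range.mp τ.2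

lemma Fdp_le (C : ℕ → ℕ → ℝ) (β : ℝ) (n s : ℕ) (hs : s < n + 1) :
    Fdp C β (n + 1) ≤ Fdp C β s + C (s + 1) (n + 1) + β := by
  rw [Fdp]
  exact Finset.inf'_le _ (Finset.mem_attach _ ⟨s, Finset.mem_range.mpr hs⟩)

theorem stmt_4 (T : ℕ) (hT : 1 ≤ T) (β : ℝ) (C : ℕ → ℕ → ℝ)
    (hsub : ∀ s t u : ℕ, 1 ≤ s → s ≤ t → t < u → u ≤ T →
      C s t + C (t + 1) u ≤ C s u)
    (τ t : ℕ) (hτt : τ < t) (htT : t < T)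
    (h : Fdp C β τ + C (τ + 1) t > Fdp C β t) :
    ∀ t' : ℕ, t < t' → t' ≤ T →
      Fdp C β τ + C (τ + 1) t' + β > Fdp C β t + C (t + 1) t' + β ∧
      Fdp C β t + C (t + 1) t' + β ≥ Fdp C β t' ∧
      ¬ (∀ s : ℕ, s < t' →
          Fdp C β τ + C (τ + 1) t' + β ≤ Fdp C β s + C (s + 1) t' + β) := by
  intro t' htt' ht'T
  have hsubτ : C (τ + 1) t + C (t + 1) t' ≤ C (τ + 1) t' :=
    hsub (τ + 1) t t' (Nat.le_add_left 1 τ) hτt htt' ht'T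
  have h1 : Fdp C β τ + C (τ + 1) t' + β > Fdp C β t + C (t + 1) t' + β := by
    have : Fdp C β τ + C (τ + 1) t + C (t + 1) t' > Fdp C β t + C (t + 1) t' := by
      linarith
    linarith
  obtain ⟨m, rfl⟩ : ∃ m, t' = m + 1 := ⟨t' - 1, by omega⟩
  have h2 : Fdp C β t + C (t + 1) (m + 1) + β ≥ Fdp C β (m + 1) :=
    Fdp_le C β m t htt'
  exact ⟨h1, h2, fun hall => absurd (hall t htt') (not_le.mpr h1)⟩
end

section
/- Let Θ ⊆ ℝ^d be nonempty, closed, and convex, let F : ℝ^d → ℝ be differentiable and μ-strongly convex (μ > 0), and let θ* ∈ Θ. Let θ ∈ Θ, let g ∈ ℝ^d with ‖g‖ ≤ C for some C ≥ 0, let η > 0, and set θ' = P_Θ(θ − η⁻¹ g), where P_Θ is the metric projection onto Θ. Then F(θ) − F(θ*) ≤ (η/2 − μ/2)‖θ − θ*‖² − (η/2)‖θ' − θ*‖² + C²/(2η) + ⟨∇F(θ) − g, θ − θ*⟩. -/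
open scoped RealInnerProductSpace

theorem stmt_7 (d : ℕ) (Θ : Set (EuclideanSpace ℝ (Fin d)))
    (hne : Θ.Nonempty) (hclosed : IsClosed Θ) (hconv : Convex ℝ Θ)
    (F : EuclideanSpace ℝ (Fin d) → ℝ) (hF : Differentiable ℝ F)
    (μ : ℝ) (hμ : 0 < μ)
    (hsc : ∀ a b : EuclideanSpace ℝ (Fin d),
      F a ≥ F b + ⟪gradient F b, a - b⟫ + μ / 2 * ‖a - b‖ ^ 2)
    (θstar : EuclideanSpace ℝ (Fin d)) (hθstar : θstar ∈ Θ)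
    (θ : EuclideanSpace ℝ (Fin d)) (hθ : θ ∈ Θ)
    (g : EuclideanSpace ℝ (Fin d)) (C : ℝ) (hC : 0 ≤ C) (hg : ‖g‖ ≤ C)
    (η : ℝ) (hη : 0 < η)
    (θ' : EuclideanSpace ℝ (Fin d)) (hθ'Θ : θ' ∈ Θ)
    (hproj : ∀ w ∈ Θ, dist (θ - η⁻¹ • g) θ' ≤ dist (θ - η⁻¹ • g) w) :
    F θ - F θstar ≤ (η / 2 - μ / 2) * ‖θ - θstar‖ ^ 2 - (η / 2) * ‖θ' - θstar‖ ^ 2 +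
      C ^ 2 / (2 * η) + ⟪gradient F θ - g, θ - θstar⟫ := by
  set u := θ - η⁻¹ • g with hu
  haveI : Nonempty ↥Θ := hne.to_subtype
  -- θ' achieves the infimum of distances
  have hinf : ‖u - θ'‖ = ⨅ w : Θ, ‖u - w‖ := by
    refine le_antisymm (le_ciInf fun w => ?_) ?_
    · simpa [dist_eq_norm] using hproj w w.2
    · have hbdd : BddBelow (Set.range fun w : Θ => ‖u - (w : EuclideanSpace ℝ (Fin d))‖) := by
        refine ⟨0, ?_⟩
        rintro x ⟨w, rfl⟩
        exact norm_nonneg _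
      exact ciInf_le hbdd ⟨θ', hθ'Θ⟩
  have hkey : ⟪u - θ', θstar - θ'⟫ ≤ 0 :=
    (norm_eq_iInf_iff_real_inner_le_zero hconv hθ'Θ).mp hinf θstar hθstar
  -- rewrite projection inequality
  have h1 : ⟪θ - θ', θstar - θ'⟫ - η⁻¹ * ⟪g, θstar - θ'⟫ ≤ 0 := by
    have h : u - θ' = (θ - θ') - η⁻¹ • g := by rw [hu]; abel
    rw [h, inner_sub_left, real_inner_smul_left] at hkey
    linarith
  have h1' : η * ⟪θ - θ', θstar - θ'⟫ ≤ ⟪g, θstar - θ'⟫ := by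
    have h := mul_le_mul_of_nonneg_left h1 (le_of_lt hη)
    rw [mul_sub, show η * (η⁻¹ * ⟪g, θstar - θ'⟫) = ⟪g, θstar - θ'⟫ by
      field_simp] at h
    linarith
  have e1 : ⟪g, θstar - θ'⟫ = ⟪g, θ - θ'⟫ - ⟪g, θ - θstar⟫ := by
    rw [← inner_sub_right]; congr 1; abel
  rw [e1] at h1'
  have e7 : ⟪θ - θ', θ' - θstar⟫ = -⟪θ - θ', θstar - θ'⟫ := by
    rw [← inner_neg_right]; congr 1; abel
  -- polarization
  have pol : ‖θ - θstar‖ ^ 2 =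
      ‖θ - θ'‖ ^ 2 + 2 * ⟪θ - θ', θ' - θstar⟫ + ‖θ' - θstar‖ ^ 2 := by
    have h := norm_add_sq_real (θ - θ') (θ' - θstar)
    have h2 : (θ - θ') + (θ' - θstar) = θ - θstar := by abel
    rw [h2] at h; linarith
  rw [e7] at pol
  have pol' : η * ‖θ - θstar‖ ^ 2 =
      η * ‖θ - θ'‖ ^ 2 - 2 * (η * ⟪θ - θ', θstar - θ'⟫) + η * ‖θ' - θstar‖ ^ 2 := by
    rw [pol]; ring
  -- Cauchy–Schwarz + AM-GM
  have hcs : ⟪g, θ - θ'⟫ ≤ C * ‖θ - θ'‖ :=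
    (real_inner_le_norm g _).trans (by nlinarith [norm_nonneg (θ - θ'), norm_nonneg g])
  have hamgm : C * ‖θ - θ'‖ ≤ η / 2 * ‖θ - θ'‖ ^ 2 + C ^ 2 / (2 * η) := by
    rw [← sub_nonneg,
      show η / 2 * ‖θ - θ'‖ ^ 2 + C ^ 2 / (2 * η) - C * ‖θ - θ'‖ =
        (η * ‖θ - θ'‖ - C) ^ 2 / (2 * η) by field_simp; ring]
    positivity
  -- strong convexity
  have hssc := hsc θstar θ
  have e4 : ⟪gradient F θ, θstar - θ⟫ = -⟪gradient F θ, θ - θstar⟫ := by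
    rw [← inner_neg_right]; congr 1; abel
  have e6 : ‖θstar - θ‖ = ‖θ - θstar‖ := norm_sub_rev _ _
  rw [e4, e6] at hssc
  rw [show ⟪gradient F θ - g, θ - θstar⟫ =
      ⟪gradient F θ, θ - θstar⟫ - ⟪g, θ - θstar⟫ from inner_sub_left _ _ _]
  nlinarith [h1', pol', hcs, hamgm, hssc,
    mul_le_mul_of_nonneg_left (hcs.trans hamgm) (le_of_lt hη)]
end
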